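/- Let Γ ≤ Aff(n) be a subgroup whose translation lattice Λ = Λ_Γ is a full lattice in ℝⁿ and whose holonomy F = F_Γ is finite. Then τ(N_{Aff(n)}(Γ)) is a finite-index subgroup of N_{Aut(Λ)}(F) := {A ∈ GL(n,ℝ) | A(Λ) = Λ and A F A⁻¹ = F}. -/

import Mathlib

open scoped Pointwise

/-- `Aff n` is the group of invertible affine transformations of `ℝⁿ`. -/
abbrev Aff (n : ℕ) := (Fin n → ℝ) ≃ᵃ[ℝ] (Fin n → ℝ)

/-- `τ : Aff(n) → GL(n,ℝ)`, sending an affine transformation to its linear part. -/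
noncomputable def tau (n : ℕ) : Aff n →* ((Fin n → ℝ) ≃ₗ[ℝ] (Fin n → ℝ)) :=
  AffineEquiv.linearHom

/-- The translation lattice `Λ_Γ` of a subgroup `Γ ≤ Aff(n)`. -/
def transLattice (n : ℕ) (Γ : Subgroup (Aff n)) : Set (Fin n → ℝ) :=
  {v | AffineEquiv.constVAdd ℝ (Fin n → ℝ) v ∈ Γ}

/-- `N_{Aut(Λ)}(F) = {A ∈ GL(n,ℝ) | A(Λ) = Λ and A F A⁻¹ = F}`: the intersection of the
setwise stabilizer of `Λ` with the normalizer of `F` in `GL(n,ℝ)`. -/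
noncomputable def NAut (n : ℕ) (Λ : Set (Fin n → ℝ))
    (F : Subgroup ((Fin n → ℝ) ≃ₗ[ℝ] (Fin n → ℝ))) :
    Subgroup ((Fin n → ℝ) ≃ₗ[ℝ] (Fin n → ℝ)) :=
  MulAction.stabilizer ((Fin n → ℝ) ≃ₗ[ℝ] (Fin n → ℝ)) Λ ⊓ Subgroup.normalizer (F : Set ((Fin n → ℝ) ≃ₗ[ℝ] (Fin n → ℝ)))


/-!
`A ∈ N_{Aut(Λ)}(F)` lies in `τ(N_{Aff(n)}(Γ))` iff `AΓA⁻¹` is conjugate to `Γ` by a translation.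
A subgroup with lattice `Λ` and holonomy in `F` is determined by the graph of its cocycle
`F → ℝⁿ/Λ`, `τ γ ↦ γ 0 mod Λ`. Averaging the translation parts over `F` shows that a suitable
translate-conjugate of `AΓA⁻¹` has its cocycle in the `|F|`-torsion of `ℝⁿ/Λ`, which is finite
since `Λ` is finitely generated. Hence these conjugates fall into finitely many classes, and
elements of `N_{Aut(Λ)}(F)` landing in the same class differ by an element of `τ(N_{Aff(n)}(Γ))`.
-/

namespace AffineEquiv

variable {k V : Type*} [Ring k] [AddCommGroup V] [Module k V]

theorem apply_eq_linear_add (g : V ≃ᵃ[k] V) (x : V) : g x = g.linear x + g 0 := by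
  simpa using g.map_vadd 0 x

theorem conj_constVAdd (g : V ≃ᵃ[k] V) (v : V) :
    g * constVAdd k V v * g⁻¹ = constVAdd k V (g.linear v) := by
  ext x
  have hx : g (g⁻¹ x) = x := g.apply_symm_apply x
  rw [apply_eq_linear_add] at hx
  simp only [coe_mul, Function.comp_apply, constVAdd_apply, vadd_eq_add]
  rw [apply_eq_linear_add, map_add]
  linear_combination (norm := abel) hx

theorem eq_constVAdd_mul_of_linear_eq {g h : V ≃ᵃ[k] V} (hgh : g.linear = h.linear) :
    g = constVAdd k V (g 0 - h 0) * h := by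
  ext x
  simp only [coe_mul, Function.comp_apply, constVAdd_apply, vadd_eq_add]
  rw [apply_eq_linear_add g x, apply_eq_linear_add h x, hgh]
  abel

end AffineEquiv

namespace Subgroup

section Conjugation

variable {G H : Type*} [Group G] [Group H]

theorem mem_normalizer_iff_conj_smul_eq {K : Subgroup G} {g : G} :
    g ∈ normalizer (K : Set G) ↔ MulAut.conj g • K = K :=
  mem_normalizer_iff_map_conj_eq

theorem inv_mul_mem_normalizer_of_conj_smul_eq {K : Subgroup G} {a b : G}
    (h : MulAut.conj a • K = MulAut.conj b • K) : b⁻¹ * a ∈ normalizer (K : Set G) := by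
  rw [mem_normalizer_iff_conj_smul_eq, map_mul, mul_smul, h, ← mul_smul, ← map_mul,
    inv_mul_cancel, map_one, one_smul]

theorem map_conj_smul (φ : G →* H) (g : G) (K : Subgroup G) :
    (MulAut.conj g • K).map φ = MulAut.conj (φ g) • K.map φ := by
  change (K.map (MulAut.conj g : G →* G)).map φ = (K.map φ).map (MulAut.conj (φ g) : H →* H)
  rw [map_map, map_map]
  congr 1
  ext x
  simp

theorem index_ne_zero_of_finite_range {β : Type*} {K : Subgroup G} {f : G → β}
    (hf : (Set.range f).Finite) (hfK : ∀ a b, f a = f b → a⁻¹ * b ∈ K) :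
    K.index ≠ 0 := by
  have := hf.to_subtype
  have : Finite (G ⧸ K) := by
    refine Finite.of_injective (fun q : G ⧸ K => (⟨f q.out, q.out, rfl⟩ : Set.range f))
      fun p q hpq => ?_
    rw [← QuotientGroup.out_eq' p, ← QuotientGroup.out_eq' q, QuotientGroup.eq]
    exact hfK _ _ (congrArg Subtype.val hpq)
  exact index_ne_zero_of_finite

end Conjugation

section Ring

variable {k V : Type*} [Ring k] [AddCommGroup V] [Module k V]

def translationLattice (Γ : Subgroup (V ≃ᵃ[k] V)) : AddSubgroup V :=
  Subgroup.toAddSubgroup' (Γ.comap (AffineEquiv.constVAddHom k V))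

def holonomy (Γ : Subgroup (V ≃ᵃ[k] V)) : Subgroup (V ≃ₗ[k] V) :=
  Γ.map AffineEquiv.linearHom

def cocycleGraph (Γ : Subgroup (V ≃ᵃ[k] V)) (Λ : AddSubgroup V) :
    Set ((V ≃ₗ[k] V) × (V ⧸ Λ)) :=
  (fun g : V ≃ᵃ[k] V => (g.linear, (g 0 : V ⧸ Λ))) '' Γ

variable {Γ : Subgroup (V ≃ᵃ[k] V)}

theorem mem_translationLattice {v : V} :
    v ∈ Γ.translationLattice ↔ AffineEquiv.constVAdd k V v ∈ Γ :=
  Iff.rfl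

theorem sub_mem_translationLattice {g h : V ≃ᵃ[k] V} (hg : g ∈ Γ) (hh : h ∈ Γ)
    (hgh : g.linear = h.linear) : g 0 - h 0 ∈ Γ.translationLattice := by
  rw [mem_translationLattice,
    eq_mul_inv_of_mul_eq (AffineEquiv.eq_constVAdd_mul_of_linear_eq hgh).symm]
  exact Γ.mul_mem hg (Γ.inv_mem hh)

theorem mem_of_linear_eq {g h : V ≃ᵃ[k] V} (hh : h ∈ Γ) (hgh : g.linear = h.linear)
    (hgh₀ : g 0 - h 0 ∈ Γ.translationLattice) : g ∈ Γ := by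
  rw [AffineEquiv.eq_constVAdd_mul_of_linear_eq hgh]
  exact Γ.mul_mem hgh₀ hh

theorem translationLattice_conj_smul (g : V ≃ᵃ[k] V) :
    ((MulAut.conj g • Γ).translationLattice : Set V) =
      g.linear • (Γ.translationLattice : Set V) := by
  ext v
  rw [Set.mem_smul_set_iff_inv_smul_mem, SetLike.mem_coe, SetLike.mem_coe, mem_translationLattice,
    mem_translationLattice, mem_pointwise_smul_iff_inv_smul_mem, ← map_inv, MulAut.smul_def,
    MulAut.conj_apply, AffineEquiv.conj_constVAdd]
  rfl

theorem holonomy_conj_smul (g : V ≃ᵃ[k] V) :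
    (MulAut.conj g • Γ).holonomy = MulAut.conj g.linear • Γ.holonomy :=
  map_conj_smul _ g Γ

theorem translationLattice_conj_smul_constVAdd (b : V) :
    (MulAut.conj (AffineEquiv.constVAdd k V b) • Γ).translationLattice = Γ.translationLattice :=
  SetLike.coe_injective <| by rw [translationLattice_conj_smul]; exact one_smul _ _

theorem holonomy_conj_smul_constVAdd (b : V) :
    (MulAut.conj (AffineEquiv.constVAdd k V b) • Γ).holonomy = Γ.holonomy := by
  rw [holonomy_conj_smul]
  exact one_smul _ _

theorem map_linearHom_normalizer_le :
    (normalizer (Γ : Set (V ≃ᵃ[k] V))).map AffineEquiv.linearHom ≤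
      MulAction.stabilizer (V ≃ₗ[k] V) (Γ.translationLattice : Set V) ⊓
        normalizer (Γ.holonomy : Set (V ≃ₗ[k] V)) := by
  rintro _ ⟨g, hg, rfl⟩
  rw [SetLike.mem_coe, mem_normalizer_iff_conj_smul_eq] at hg
  refine mem_inf.mpr ⟨?_, ?_⟩
  · rw [MulAction.mem_stabilizer_iff, AffineEquiv.linearHom_apply,
      ← translationLattice_conj_smul, hg]
  · rw [mem_normalizer_iff_conj_smul_eq, AffineEquiv.linearHom_apply, ← holonomy_conj_smul, hg]

theorem linear_sum_add_card_nsmul_sub_sum_mem [Fintype Γ.holonomy]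
    (s : Γ.holonomy → V ≃ᵃ[k] V) (hs : ∀ f, s f ∈ Γ) (hsf : ∀ f, (s f).linear = f)
    {g : V ≃ᵃ[k] V} (hg : g ∈ Γ) :
    g.linear (∑ f, s f 0) + Fintype.card Γ.holonomy • g 0 - ∑ f, s f 0 ∈
      Γ.translationLattice := by
  let f₀ : Γ.holonomy := ⟨g.linear, g, hg, rfl⟩
  have hreindex : ∑ f, s (f₀ * f) 0 = ∑ f, s f 0 :=
    Fintype.sum_equiv (Equiv.mulLeft f₀) _ _ fun _ => rfl
  have hterm : ∀ f, (g * s f) 0 - s (f₀ * f) 0 ∈ Γ.translationLattice := fun f =>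
    sub_mem_translationLattice (Γ.mul_mem hg (hs f)) (hs _)
      (by rw [hsf]; exact congrArg (g.linear * ·) (hsf f))
  have hsum := Γ.translationLattice.sum_mem (t := Finset.univ) fun f _ => hterm f
  simpa only [AffineEquiv.coe_mul, Function.comp_apply, AffineEquiv.apply_eq_linear_add g (s _ 0),
    Finset.sum_sub_distrib, Finset.sum_add_distrib, hreindex, ← map_sum, Finset.sum_const,
    Finset.card_univ] using hsum

theorem le_of_cocycleGraph_subset {Γ₁ Γ₂ : Subgroup (V ≃ᵃ[k] V)}
    (h : Γ₁.cocycleGraph Γ₂.translationLattice ⊆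
      Γ₂.cocycleGraph Γ₂.translationLattice) :
    Γ₁ ≤ Γ₂ := by
  intro g hg
  obtain ⟨g₂, hg₂, hgg₂⟩ := h ⟨g, hg, rfl⟩
  rw [Prod.ext_iff] at hgg₂
  exact mem_of_linear_eq hg₂ hgg₂.1.symm (QuotientAddGroup.eq_iff_sub_mem.mp hgg₂.2.symm)

theorem finite_setOf_translationLattice_eq {Λ : AddSubgroup V} {F : Subgroup (V ≃ₗ[k] V)}
    [Finite F] {m : ℕ} (hΛ : {x : V ⧸ Λ | m • x = 0}.Finite) :
    {Γ : Subgroup (V ≃ᵃ[k] V) | Γ.translationLattice = Λ ∧ Γ.holonomy ≤ F ∧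
      ∀ g ∈ Γ, m • g 0 ∈ Λ}.Finite := by
  refine Set.Finite.of_injOn (f := fun Γ => Γ.cocycleGraph Λ)
    (t := {s | s ⊆ (F : Set (V ≃ₗ[k] V)) ×ˢ {x | m • x = 0}}) ?_ ?_
    ((F : Set (V ≃ₗ[k] V)).toFinite.prod hΛ).finite_subsets
  · rintro Γ ⟨-, hF, hm⟩ _ ⟨g, hg, rfl⟩
    exact ⟨hF ⟨g, hg, rfl⟩, (QuotientAddGroup.eq_zero_iff _).mpr (hm g hg)⟩
  · rintro Γ₁ ⟨hΛ₁, -⟩ Γ₂ ⟨hΛ₂, -⟩ hΓ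
    exact le_antisymm (le_of_cocycleGraph_subset (by rw [hΛ₂]; exact hΓ.le))
      (le_of_cocycleGraph_subset (by rw [hΛ₁]; exact hΓ.ge))

end Ring

end Subgroup

theorem AddSubgroup.finite_setOf_nsmul_eq_zero {k V : Type*} [DivisionRing k] [CharZero k]
    [AddCommGroup V] [Module k V] (Λ : AddSubgroup V) [AddGroup.FG Λ] {m : ℕ} (hm : m ≠ 0) :
    {x : V ⧸ Λ | m • x = 0}.Finite := by
  have hm' : (m : k) ≠ 0 := Nat.cast_ne_zero.mpr hm
  let ψ : Λ →+ V ⧸ Λ :=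
    (QuotientAddGroup.mk' Λ).comp ((DistribSMul.toAddMonoidHom V (m : k)⁻¹).comp Λ.subtype)
  have hψ : ∀ v : Λ, m • ψ v = 0 := fun v => by
    change m • ((((m : k)⁻¹ • (v : V) : V)) : V ⧸ Λ) = 0
    rw [← QuotientAddGroup.mk_nsmul, ← Nat.cast_smul_eq_nsmul k, smul_smul,
      mul_inv_cancel₀ hm', one_smul, QuotientAddGroup.eq_zero_iff]
    exact v.2
  have : Finite ψ.range := AddCommGroup.finite_of_fg_isAddTorsion _ fun ⟨_, v, rfl⟩ =>
    isOfFinAddOrder_iff_nsmul_eq_zero.mpr ⟨m, Nat.pos_of_ne_zero hm, Subtype.ext (hψ v)⟩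
  refine (Set.finite_coe_iff.mp this).subset fun x hx => ?_
  obtain ⟨u, rfl⟩ := QuotientAddGroup.mk_surjective x
  have hu : m • u ∈ Λ := by
    simpa [← QuotientAddGroup.mk_nsmul] using hx
  refine ⟨⟨m • u, hu⟩, ?_⟩
  simp [ψ, ← Nat.cast_smul_eq_nsmul k, smul_smul, inv_mul_cancel₀ hm']

theorem AddSubgroup.fg_of_discreteTopology {E : Type*} [NormedAddCommGroup E] [NormedSpace ℝ E]
    [FiniteDimensional ℝ E] (L : AddSubgroup E) [hL : DiscreteTopology L] : AddGroup.FG L :=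
  have : DiscreteTopology L.toIntSubmodule := hL
  Module.Finite.iff_addGroup_fg.mp (inferInstanceAs (Module.Finite ℤ L.toIntSubmodule))

namespace Subgroup

variable {k V : Type*} [DivisionRing k] [CharZero k] [AddCommGroup V] [Module k V]
  {Γ : Subgroup (V ≃ᵃ[k] V)}

theorem exists_conj_smul_constVAdd_nsmul_mem [Finite Γ.holonomy] :
    ∃ b : V, ∀ g ∈ MulAut.conj (AffineEquiv.constVAdd k V b) • Γ,
      Nat.card Γ.holonomy • g 0 ∈ Γ.translationLattice := by
  have := Fintype.ofFinite Γ.holonomy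
  choose s hs hsf using fun f : Γ.holonomy => mem_map.mp f.2
  have hm : (Fintype.card Γ.holonomy : k) ≠ 0 := Nat.cast_ne_zero.mpr Fintype.card_ne_zero
  refine ⟨-(Fintype.card Γ.holonomy : k)⁻¹ • ∑ f, s f 0, fun g' hg' => ?_⟩
  obtain ⟨g, hg, rfl⟩ := (mem_smul_pointwise_iff_exists _ _ _).mp hg'
  rw [Nat.card_eq_fintype_card]
  convert linear_sum_add_card_nsmul_sub_sum_mem s hs hsf hg using 1
  simp only [MulAut.smul_def, MulAut.conj_apply, AffineEquiv.coe_mul, Function.comp_apply,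
    AffineEquiv.inv_def, AffineEquiv.constVAdd_symm, AffineEquiv.constVAdd_apply, vadd_eq_add,
    add_zero]
  rw [AffineEquiv.apply_eq_linear_add g, ← Nat.cast_smul_eq_nsmul k, ← Nat.cast_smul_eq_nsmul k]
  simp only [smul_add, map_smul, neg_smul, neg_neg, smul_neg, smul_smul, mul_inv_cancel₀ hm,
    one_smul]
  abel

theorem exists_linear_eq_conj_smul_mem [Finite Γ.holonomy] {A : V ≃ₗ[k] V}
    (hΛ : A ∈ MulAction.stabilizer (V ≃ₗ[k] V) (Γ.translationLattice : Set V))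
    (hF : A ∈ normalizer (Γ.holonomy : Set (V ≃ₗ[k] V))) :
    ∃ g : V ≃ᵃ[k] V, g.linear = A ∧
      (MulAut.conj g • Γ).translationLattice = Γ.translationLattice ∧
      (MulAut.conj g • Γ).holonomy ≤ Γ.holonomy ∧
      ∀ x ∈ MulAut.conj g • Γ, Nat.card Γ.holonomy • x 0 ∈ Γ.translationLattice := by
  set Γ' := MulAut.conj A.toAffineEquiv • Γ
  have hΛ' : Γ'.translationLattice = Γ.translationLattice :=
    SetLike.coe_injective <| (translationLattice_conj_smul _).trans hΛ
  have hF' : Γ'.holonomy = Γ.holonomy :=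
    (holonomy_conj_smul _).trans (mem_normalizer_iff_conj_smul_eq.mp hF)
  have : Finite Γ'.holonomy := hF' ▸ ‹_›
  obtain ⟨b, hb⟩ := exists_conj_smul_constVAdd_nsmul_mem (Γ := Γ')
  refine ⟨AffineEquiv.constVAdd k V b * A.toAffineEquiv, ?_, ?_, ?_, ?_⟩
  · ext; rfl
  · rw [map_mul, mul_smul, translationLattice_conj_smul_constVAdd, hΛ']
  · rw [map_mul, mul_smul, holonomy_conj_smul_constVAdd, hF']
  · rw [map_mul, mul_smul, ← hΛ', ← hF']
    exact hb

end Subgroup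

theorem stmt10_general (n : ℕ) (Γ : Subgroup (Aff n))
    (hdisc : DiscreteTopology ↥(transLattice n Γ))
    (hfin : Finite ↥(Γ.map (tau n))) :
    (Subgroup.normalizer (Γ : Set (Aff n))).map (tau n) ≤ NAut n (transLattice n Γ) (Γ.map (tau n)) ∧
    ((Subgroup.normalizer (Γ : Set (Aff n))).map (tau n)).relIndex (NAut n (transLattice n Γ) (Γ.map (tau n))) ≠ 0 := by
  refine ⟨Subgroup.map_linearHom_normalizer_le, ?_⟩
  have : Finite Γ.holonomy := hfin
  have : DiscreteTopology Γ.translationLattice := hdisc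
  have := Γ.translationLattice.fg_of_discreteTopology
  have hS := Subgroup.finite_setOf_translationLattice_eq (Λ := Γ.translationLattice)
    (F := Γ.holonomy) (Γ.translationLattice.finite_setOf_nsmul_eq_zero (k := ℝ)
      (Nat.card_pos (α := Γ.holonomy)).ne')
  choose g hgA hgS using fun A : NAut n (transLattice n Γ) (Γ.map (tau n)) =>
    Subgroup.exists_linear_eq_conj_smul_mem A.2.1 A.2.2
  refine Subgroup.index_ne_zero_of_finite_range (f := fun A => MulAut.conj (g A) • Γ)
    (hS.subset (Set.range_subset_iff.mpr hgS)) fun A B hAB => ?_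
  refine Subgroup.mem_subgroupOf.mpr
    ⟨(g A)⁻¹ * g B, Subgroup.inv_mul_mem_normalizer_of_conj_smul_eq hAB.symm, ?_⟩
  change AffineEquiv.linearHom _ = _
  rw [map_mul, map_inv, AffineEquiv.linearHom_apply, AffineEquiv.linearHom_apply, hgA, hgA]
  rfl

/-- Let `Γ ≤ Aff(n)` have full translation lattice `Λ = Λ_Γ` and finite
holonomy `F = F_Γ`.  Then `τ(N_{Aff(n)}(Γ))` is a finite-index subgroup of
`N_{Aut(Λ)}(F) = {A ∈ GL(n,ℝ) | A(Λ) = Λ, A F A⁻¹ = F}`. -/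
theorem stmt10 (n : ℕ) (Γ : Subgroup (Aff n))
    (hdisc : DiscreteTopology ↥(transLattice n Γ))
    (hspan : Submodule.span ℝ (transLattice n Γ) = ⊤)
    (hfin : Finite ↥(Γ.map (tau n))) :
    (Subgroup.normalizer (Γ : Set (Aff n))).map (tau n) ≤ NAut n (transLattice n Γ) (Γ.map (tau n)) ∧
    ((Subgroup.normalizer (Γ : Set (Aff n))).map (tau n)).relIndex (NAut n (transLattice n Γ) (Γ.map (tau n))) ≠ 0 :=
  stmt10_general n Γ hdisc hfin
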